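/- Define, for an integer n ≥ 2 and an integer i with 0 ≤ i ≤ n, C̃_n(i) := n^{−2}·( 3i² − 3in + n²/2 + 2n·H_n − n/2 − 2i·H_i − 2(n−i)·H_{n−i} ), where H_m := ∑_{k=1}^{m} 1/k and H_0 := 0, and define C̃(x) := 1/2 − 3x(1−x) for x ∈ [0,1]. Then there exists a constant K > 0 such that for every integer n ≥ 2 and every x ∈ [0,1], |C̃_n(⌈nx⌉) − C̃(x)| ≤ (2·log n + K)/n. -/

import Mathlib

/-- The `m`-th harmonic number, with `H_0 = 0`. -/
noncomputable def harm (m : ℕ) : ℝ := ∑ k ∈ Finset.Icc 1 m, 1 / (k : ℝ)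

/-- The toll function `C̃_n(i)` of the recursive representation of the normalized
discrete cophenetic index of a Yule tree without root edge. -/
noncomputable def Ctilde (n i : ℕ) : ℝ :=
  (3 * (i : ℝ) ^ 2 - 3 * (i : ℝ) * (n : ℝ) + (n : ℝ) ^ 2 / 2 + 2 * (n : ℝ) * harm n -
      (n : ℝ) / 2 - 2 * (i : ℝ) * harm i - 2 * ((n : ℝ) - (i : ℝ)) * harm (n - i)) /
    (n : ℝ) ^ 2

/-! The toll splits as `C̃(i/n) - 1/(2n) + 2 D_n(i)/n²`, where
`D_n(i) = n H_n - i H_i - (n-i) H_{n-i}` lies in `[0, n H_n]`. With `H_n ≤ 1 + log n` and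
`|⌈nx⌉/n - x| ≤ 1/n`, the quadratic part contributes `3/n`, the middle term `1/(2n)` and the
harmonic part `2(1 + log n)/n`, which gives the bound with `K = 11/2`. -/

lemma harm_eq_harmonic (m : ℕ) : harm m = (harmonic m : ℝ) := by
  simp [harm, harmonic_eq_sum_Icc, one_div]

lemma harm_nonneg (m : ℕ) : 0 ≤ harm m :=
  Finset.sum_nonneg fun _ _ => by positivity

lemma harm_mono : Monotone harm := fun _ _ h =>
  Finset.sum_le_sum_of_subset_of_nonneg (Finset.Icc_subset_Icc_right h)
    fun _ _ _ => by positivity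

lemma harm_le_one_add_log (m : ℕ) : harm m ≤ 1 + Real.log m := by
  rw [harm_eq_harmonic]
  exact harmonic_le_one_add_log m

noncomputable def harmDefect (n i : ℕ) : ℝ :=
  n * harm n - i * harm i - ((n : ℝ) - i) * harm (n - i)

lemma harmDefect_nonneg {n i : ℕ} (h : i ≤ n) : 0 ≤ harmDefect n i := by
  have hi : harm i ≤ harm n := harm_mono h
  have hni : harm (n - i) ≤ harm n := harm_mono (Nat.sub_le n i)
  have hin : (i : ℝ) ≤ n := by exact_mod_cast h
  unfold harmDefect
  nlinarith [Nat.cast_nonneg (α := ℝ) i]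

lemma harmDefect_le {n i : ℕ} (h : i ≤ n) : harmDefect n i ≤ n * harm n := by
  have hin : (i : ℝ) ≤ n := by exact_mod_cast h
  unfold harmDefect
  nlinarith [harm_nonneg i, harm_nonneg (n - i), Nat.cast_nonneg (α := ℝ) i]

lemma harmDefect_div_sq_le {n i : ℕ} (hn : (0 : ℝ) < n) (h : i ≤ n) :
    harmDefect n i / n ^ 2 ≤ (1 + Real.log n) / n :=
  calc harmDefect n i / n ^ 2 ≤ n * harm n / n ^ 2 := by
        gcongr
        exact harmDefect_le h
    _ = harm n / n := by field_simp
    _ ≤ (1 + Real.log n) / n := by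
        gcongr
        exact harm_le_one_add_log n

lemma Ctilde_eq {n : ℕ} (hn : (n : ℝ) ≠ 0) (i : ℕ) :
    Ctilde n i = 1 / 2 - 3 * (i / n) * (1 - i / n) - 1 / (2 * n) +
      2 * (harmDefect n i / n ^ 2) := by
  unfold Ctilde harmDefect
  field_simp
  ring

lemma abs_mul_one_sub_sub_mul_one_sub_le {t x : ℝ} (ht : t ∈ Set.Icc (0 : ℝ) 1)
    (hx : x ∈ Set.Icc (0 : ℝ) 1) : |t * (1 - t) - x * (1 - x)| ≤ |t - x| := by
  have hfactor : t * (1 - t) - x * (1 - x) = (t - x) * (1 - t - x) := by ring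
  have hbound : |1 - t - x| ≤ 1 := abs_le.mpr ⟨by linarith [ht.2, hx.2], by linarith [ht.1, hx.1]⟩
  rw [hfactor, abs_mul]
  exact mul_le_of_le_one_right (abs_nonneg _) hbound

lemma natCeil_natCast_mul_le {n : ℕ} {x : ℝ} (hx : x ≤ 1) : ⌈(n : ℝ) * x⌉₊ ≤ n :=
  Nat.ceil_le.mpr (mul_le_of_le_one_right n.cast_nonneg hx)

lemma abs_natCeil_mul_div_sub_le {n : ℕ} (hn : (0 : ℝ) < n) {x : ℝ} (hx : 0 ≤ x) :
    |⌈(n : ℝ) * x⌉₊ / (n : ℝ) - x| ≤ 1 / n := by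
  have hlo : (n : ℝ) * x ≤ ⌈(n : ℝ) * x⌉₊ := Nat.le_ceil _
  have hhi : (⌈(n : ℝ) * x⌉₊ : ℝ) < n * x + 1 := Nat.ceil_lt_add_one (by positivity)
  rw [show (⌈(n : ℝ) * x⌉₊ / (n : ℝ) - x) = (⌈(n : ℝ) * x⌉₊ - n * x) / n by field_simp,
    abs_div, abs_of_pos hn, div_le_div_iff_of_pos_right hn, abs_le]
  constructor <;> linarith

theorem stmt16 :
    ∃ K : ℝ, 0 < K ∧ ∀ n : ℕ, 2 ≤ n → ∀ x : ℝ, x ∈ Set.Icc (0 : ℝ) 1 →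
      |Ctilde n ⌈(n : ℝ) * x⌉₊ - (1 / 2 - 3 * x * (1 - x))| ≤
        (2 * Real.log n + K) / n := by
  refine ⟨11 / 2, by norm_num, fun n hn x hx => ?_⟩
  have hn0 : (0 : ℝ) < n := Nat.cast_pos.mpr (by omega)
  set i := ⌈(n : ℝ) * x⌉₊
  have hin : i ≤ n := natCeil_natCast_mul_le hx.2
  have ht : (i / n : ℝ) ∈ Set.Icc (0 : ℝ) 1 :=
    ⟨by positivity, div_le_one_of_le₀ (by exact_mod_cast hin) hn0.le⟩
  have hquad := abs_mul_one_sub_sub_mul_one_sub_le ht hx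
  have hceil := abs_natCeil_mul_div_sub_le hn0 hx.1
  have hdefect := harmDefect_div_sq_le hn0 hin
  rw [Ctilde_eq hn0.ne']
  calc _ = |3 * (x * (1 - x) - i / n * (1 - i / n)) - 1 / (2 * n) +
          2 * (harmDefect n i / n ^ 2)| := by ring_nf
    _ ≤ 3 * |i / n - x| + 1 / (2 * n) + 2 * (harmDefect n i / n ^ 2) := by
      have hD : 0 ≤ harmDefect n i / n ^ 2 := by have := harmDefect_nonneg hin; positivity
      have hhalf : 0 < 1 / (2 * (n : ℝ)) := by positivity
      obtain ⟨hq₁, hq₂⟩ := abs_le.mp hquad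
      rw [abs_le]
      constructor <;> linarith
    _ ≤ 3 * (1 / n) + 1 / (2 * n) + 2 * ((1 + Real.log n) / n) := by gcongr
    _ = (2 * Real.log n + 11 / 2) / n := by field_simp; ring
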